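/- For every U-invariant f ∈ C_c(F^×, K) and every x ∈ F^×, the sum ((1−ϖ)⁻¹f)(x) := Σ_{n=0}^∞ f(ϖ⁻ⁿx) has only finitely many nonzero terms; the resulting function on F^× extends to a locally constant compactly supported function (1−ϖ)⁻¹f : F → K. Moreover, the map f ↦ (1−ϖ)⁻¹f is an injective K-linear F^×-equivariant map from C_c(F^×, K)^U into C_c⁰(F, K), and its image is exactly C_c⁰(F, K)^U, the space of U-invariant locally constant compactly supported functions on F. -/

import Mathlib

/-!
Write `G = (1-ϖ)⁻¹f`. If `f` has compact support, `ord` is bounded below on its support, so for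
`x ≠ 0` only finitely many terms of `G x` survive and `G x = f x + G (ϖ⁻¹x)`. Hence
`f x = G x - G (ϖ⁻¹x)`, which gives injectivity; conversely, for `g ∈ C_c⁰(F, K)^U` the sum of
`g - g(ϖ⁻¹·)` telescopes back to `g`. For `U`-invariant `f`, `G x` depends only on `ord x`; it
vanishes for `ord x ≪ 0` and, since `f` vanishes near `0`, is constant for `ord x ≫ 0`, so giving
`G 0` that constant value yields a locally constant compactly supported extension.

The topological input is that `ord` is locally constant on `F^×`, although no ultrametric
inequality is assumed: by the tube lemma for the compact set `{ord ≥ 1} ∪ {0}`, which misses `1`,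
every `x` near `1` satisfies `x ∉ {ord ≥ 1}` and `x⁻¹ ∉ {ord ≥ 1}`, i.e. `ord x = 0`. Hence the
balls `{ord ≥ c} ∪ {0}` are compact open, and a function has compact support iff `ord` is bounded
below on its support.
-/

open Filter

variable {F K : Type*}

/-- `f` belongs to `C_c(F^×, K)`, viewed as the subspace of `C_c(F, K)` of continuous
compactly supported functions vanishing identically near `0`. -/
def MemCcUnits [Field F] [TopologicalSpace F] [TopologicalSpace K] [Zero K]
    (f : F → K) : Prop :=
  Continuous f ∧ HasCompactSupport f ∧ f =ᶠ[nhds (0 : F)] 0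

/-- `f` is invariant under the action `(u·f)(x) = f(u⁻¹x)` of the unit group
`U = {u | ord u = 0}`. -/
def IsUnitInv [Field F] (ord : F → ℤ) (f : F → K) : Prop :=
  ∀ u x : F, u ≠ 0 → ord u = 0 → f (u * x) = f x

/-- The sum `((1-ϖ)⁻¹ f)(x) = ∑_{n≥0} f(ϖ⁻ⁿ x)` (a `finsum`, i.e. it has the asserted
value whenever only finitely many terms are nonzero). -/
noncomputable def geomSum [Field F] [AddCommMonoid K] (ϖ : F) (f : F → K) (x : F) : K :=
  ∑ᶠ n : ℕ, f ((ϖ ^ n)⁻¹ * x)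

open Function Set Topology
open scoped Pointwise

section FinsumNat

variable {M : Type*}

theorem finsum_nat_eq_add_finsum_succ [AddCommMonoid M] {t : ℕ → M} (ht : (support t).Finite) :
    ∑ᶠ n, t n = t 0 + ∑ᶠ n, t (n + 1) := by
  obtain ⟨N, hN⟩ := ht.bddAbove
  have h₀ : support t ⊆ Finset.range (N + 1) := fun n hn => by
    simpa [Nat.lt_succ_iff] using hN hn
  have h₁ : support (fun n => t (n + 1)) ⊆ Finset.range N := fun n hn => by
    simpa [Nat.succ_le_iff] using hN (show n + 1 ∈ support t from hn)
  rw [finsum_eq_finsetSum_of_support_subset _ h₀, finsum_eq_finsetSum_of_support_subset _ h₁,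
    Finset.sum_range_succ', add_comm]

theorem finsum_nat_sub_succ [AddCommGroup M] {t : ℕ → M} (ht : (support t).Finite) :
    ∑ᶠ n, (t n - t (n + 1)) = t 0 := by
  have ht' : (support fun n => t (n + 1)).Finite := ht.preimage (add_left_injective 1).injOn
  rw [finsum_sub_distrib ht ht', finsum_nat_eq_add_finsum_succ ht, add_sub_cancel_right]

end FinsumNat

section GeomSum

variable [Field F] (ϖ : F)

theorem inv_pow_succ_mul (n : ℕ) (x : F) : (ϖ ^ (n + 1))⁻¹ * x = (ϖ ^ n)⁻¹ * (ϖ⁻¹ * x) := by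
  rw [pow_succ, mul_inv, mul_assoc]

theorem geomSum_eq_add_geomSum_inv_mul [AddCommMonoid K] {f : F → K} {x : F}
    (h : (support fun n : ℕ => f ((ϖ ^ n)⁻¹ * x)).Finite) :
    geomSum ϖ f x = f x + geomSum ϖ f (ϖ⁻¹ * x) := by
  rw [geomSum, finsum_nat_eq_add_finsum_succ h]
  simp only [pow_zero, inv_one, one_mul, inv_pow_succ_mul, geomSum]

theorem geomSum_sub_comp_inv_mul [AddCommGroup K] {g : F → K} {x : F}
    (h : (support fun n : ℕ => g ((ϖ ^ n)⁻¹ * x)).Finite) :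
    geomSum ϖ (fun y => g y - g (ϖ⁻¹ * y)) x = g x := by
  simp only [geomSum, mul_left_comm ϖ⁻¹, ← inv_pow_succ_mul]
  rw [finsum_nat_sub_succ h, pow_zero, inv_one, one_mul]

theorem geomSum_smul_add {R : Type*} [AddCommMonoid K] [DistribSMul R K] {f₁ f₂ : F → K} {x : F}
    (c : R) (h₁ : (support fun n : ℕ => f₁ ((ϖ ^ n)⁻¹ * x)).Finite)
    (h₂ : (support fun n : ℕ => f₂ ((ϖ ^ n)⁻¹ * x)).Finite) :
    geomSum ϖ (c • f₁ + f₂) x = c • geomSum ϖ f₁ x + geomSum ϖ f₂ x := by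
  have h₁' : (support fun n : ℕ => c • f₁ ((ϖ ^ n)⁻¹ * x)).Finite :=
    h₁.subset (support_const_smul_subset c _)
  simp only [geomSum, Pi.add_apply, Pi.smul_apply]
  rw [finsum_add_distrib h₁' h₂, smul_finsum' c h₁]

theorem geomSum_comp_inv_mul [AddCommMonoid K] (f : F → K) (a x : F) :
    geomSum ϖ (fun y => f (a⁻¹ * y)) x = geomSum ϖ f (a⁻¹ * x) :=
  finsum_congr fun _ => congrArg f (mul_left_comm _ _ _)

theorem isUnitInv_geomSum [AddCommMonoid K] {ord : F → ℤ} {f : F → K} (hf : IsUnitInv ord f) :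
    IsUnitInv ord (geomSum ϖ f) := fun u x hu hu0 =>
  finsum_congr fun _ => by rw [mul_left_comm]; exact hf u _ hu hu0

end GeomSum

section OrdMul

variable [Field F] {ord : F → ℤ}
  (hord : ∀ x y : F, x ≠ 0 → y ≠ 0 → ord (x * y) = ord x + ord y)
include hord

theorem ord_one_of_map_mul : ord 1 = 0 := by
  have h := hord 1 1 one_ne_zero one_ne_zero
  rw [mul_one] at h
  omega

theorem ord_inv_of_map_mul {x : F} (hx : x ≠ 0) : ord x⁻¹ = -ord x := by
  have h := hord x x⁻¹ hx (inv_ne_zero hx)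
  rw [mul_inv_cancel₀ hx, ord_one_of_map_mul hord] at h
  omega

theorem IsUnitInv.eq_of_ord_eq {g : F → K} (hg : IsUnitInv ord g) {x y : F} (hx : x ≠ 0)
    (hy : y ≠ 0) (h : ord x = ord y) : g x = g y := by
  have hu : ord (y * x⁻¹) = 0 := by
    rw [hord _ _ hy (inv_ne_zero hx), ord_inv_of_map_mul hord hx]
    omega
  simpa [mul_assoc, inv_mul_cancel₀ hx] using (hg _ x (mul_ne_zero hy (inv_ne_zero hx)) hu).symm

end OrdMul

theorem IsUnitInv.update_zero [Field F] [DecidableEq F] {ord : F → ℤ} {g : F → K}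
    (hg : IsUnitInv ord g) (c : K) : IsUnitInv ord (update g 0 c) := by
  intro u x hu hu0
  rcases eq_or_ne x 0 with rfl | hx
  · rw [mul_zero]
  · rw [update_of_ne (mul_ne_zero hu hx), update_of_ne hx, hg u x hu hu0]

def ordBall [Field F] (ord : F → ℤ) (c : ℤ) : Set F :=
  {x | x = 0 ∨ c ≤ ord x}

theorem ordBall_antitone [Field F] (ord : F → ℤ) : Antitone (ordBall ord) :=
  fun _ _ h _ hx => hx.imp_right h.trans

structure IsOrdUniformizer [Field F] (ord : F → ℤ) (ϖ : F) : Prop where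
  ord_mul : ∀ x y : F, x ≠ 0 → y ≠ 0 → ord (x * y) = ord x + ord y
  ne_zero : ϖ ≠ 0
  ord_self : ord ϖ = 1

namespace IsOrdUniformizer

variable [Field F] {ord : F → ℤ} {ϖ : F} (hv : IsOrdUniformizer ord ϖ)
include hv

theorem ord_zpow (m : ℤ) : ord (ϖ ^ m) = m := by
  have hpow (n : ℕ) : ord (ϖ ^ n) = n := by
    induction n with
    | zero => simpa using ord_one_of_map_mul hv.ord_mul
    | succ n ih =>
      rw [pow_succ, hv.ord_mul _ _ (pow_ne_zero _ hv.ne_zero) hv.ne_zero, ih, hv.ord_self]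
      push_cast
      ring
  obtain ⟨n, rfl | rfl⟩ := m.eq_nat_or_neg
  · simpa using hpow n
  · rw [zpow_neg, zpow_natCast, ord_inv_of_map_mul hv.ord_mul (pow_ne_zero _ hv.ne_zero), hpow]

theorem ord_zpow_mul {x : F} (hx : x ≠ 0) (m : ℤ) : ord (ϖ ^ m * x) = m + ord x := by
  rw [hv.ord_mul _ _ (zpow_ne_zero m hv.ne_zero) hx, hv.ord_zpow]

theorem inv_pow_mul_ne_zero {x : F} (hx : x ≠ 0) (n : ℕ) : (ϖ ^ n)⁻¹ * x ≠ 0 :=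
  mul_ne_zero (inv_ne_zero (pow_ne_zero n hv.ne_zero)) hx

theorem ord_inv_pow_mul {x : F} (hx : x ≠ 0) (n : ℕ) : ord ((ϖ ^ n)⁻¹ * x) = ord x - n := by
  rw [← zpow_natCast, ← zpow_neg, hv.ord_zpow_mul hx]
  ring

theorem ordBall_eq_zpow_smul (c : ℤ) : ordBall ord c = ϖ ^ c • ordBall ord 0 := by
  ext x
  rw [mem_smul_set_iff_inv_smul_mem₀ (zpow_ne_zero c hv.ne_zero), smul_eq_mul, ← zpow_neg]
  rcases eq_or_ne x 0 with rfl | hx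
  · simp [ordBall]
  · show (x = 0 ∨ c ≤ ord x) ↔ (ϖ ^ (-c) * x = 0 ∨ 0 ≤ ord (ϖ ^ (-c) * x))
    rw [hv.ord_zpow_mul hx]
    simp only [hx, mul_ne_zero (zpow_ne_zero _ hv.ne_zero) hx, false_or]
    omega

theorem finite_support_geomSum_term [Zero K] {f : F → K} {M : ℤ} (hM : support f ⊆ ordBall ord M)
    {x : F} (hx : x ≠ 0) : (support fun n : ℕ => f ((ϖ ^ n)⁻¹ * x)).Finite := by
  refine (finite_Iic (ord x - M).toNat).subset fun n hn => ?_
  have h := (hM hn).resolve_left (hv.inv_pow_mul_ne_zero hx n)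
  rw [hv.ord_inv_pow_mul hx] at h
  rw [mem_Iic]
  omega

theorem geomSum_eq_zero_of_ord_lt [AddCommMonoid K] {f : F → K} {M : ℤ}
    (hM : support f ⊆ ordBall ord M) {x : F} (hx : x ≠ 0) (h : ord x < M) : geomSum ϖ f x = 0 :=
  finsum_eq_zero_of_forall_eq_zero fun n => notMem_support.1 fun hn => by
    have h' := (hM hn).resolve_left (hv.inv_pow_mul_ne_zero hx n)
    rw [hv.ord_inv_pow_mul hx] at h'
    omega

theorem geomSum_eq_of_le_ord [AddCommMonoid K] {f : F → K} {M N : ℤ}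
    (hM : support f ⊆ ordBall ord M) (hN : ∀ x ∈ ordBall ord N, f x = 0) (hf : IsUnitInv ord f)
    {x : F} (hx : x ≠ 0) (h : N ≤ ord x) : geomSum ϖ f x = geomSum ϖ f (ϖ ^ N) := by
  obtain ⟨k, hk⟩ : ∃ k : ℕ, ord x = N + k := ⟨(ord x - N).toNat, by omega⟩
  induction k generalizing x with
  | zero =>
    exact (isUnitInv_geomSum ϖ hf).eq_of_ord_eq hv.ord_mul hx (zpow_ne_zero N hv.ne_zero)
      (by rw [hv.ord_zpow]; omega)
  | succ k ih =>
    have hx' : ϖ⁻¹ * x ≠ 0 := mul_ne_zero (inv_ne_zero hv.ne_zero) hx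
    have hk' : ord (ϖ⁻¹ * x) = N + k := by
      have := hv.ord_inv_pow_mul hx 1
      rw [pow_one] at this
      omega
    rw [geomSum_eq_add_geomSum_inv_mul ϖ (hv.finite_support_geomSum_term hM hx),
      hN x (Or.inr h), zero_add]
    exact ih hx' (by omega) hk'

end IsOrdUniformizer

theorem memCcUnits_sub_comp_inv_mul [Field F] [TopologicalSpace F] [IsTopologicalRing F]
    [TopologicalSpace K] [AddGroup K] {ϖ : F} (hϖ : ϖ ≠ 0) {g : F → K} (hg : IsLocallyConstant g)
    (hgc : HasCompactSupport g) : MemCcUnits fun x => g x - g (ϖ⁻¹ * x) := by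
  have hlc : IsLocallyConstant fun x => g x - g (ϖ⁻¹ * x) :=
    hg.sub (hg.comp_continuous (continuous_const_mul ϖ⁻¹))
  have hgc' : HasCompactSupport fun x => g (ϖ⁻¹ * x) :=
    hgc.comp_homeomorph (Homeomorph.mulLeft₀ ϖ⁻¹ (inv_ne_zero hϖ))
  refine ⟨hlc.continuous, hgc.comp₂_left hgc' (sub_self 0), ?_⟩
  filter_upwards [hlc.eventually_eq 0] with x hx
  simpa using hx

structure IsLocalFieldOrd [Field F] [TopologicalSpace F] (ord : F → ℤ) (ϖ : F) : Prop
    extends IsOrdUniformizer ord ϖ where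
  hasBasis_nhds_zero : (𝓝 (0 : F)).HasBasis (fun _ : ℕ => True) fun n => ordBall ord n
  isCompact_ordBall_zero : IsCompact (ordBall ord 0)

namespace IsLocalFieldOrd

section

variable [Field F] [TopologicalSpace F] {ord : F → ℤ} {ϖ : F} (hv : IsLocalFieldOrd ord ϖ)
include hv

theorem ordBall_mem_nhds_zero (c : ℤ) : ordBall ord c ∈ 𝓝 (0 : F) :=
  mem_of_superset (hv.hasBasis_nhds_zero.mem_of_mem trivial)
    (ordBall_antitone ord (Int.self_le_toNat c))

end

variable [Field F] [TopologicalSpace F] [IsTopologicalRing F] {ord : F → ℤ} {ϖ : F}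
  (hv : IsLocalFieldOrd ord ϖ)
include hv

theorem t2Space : T2Space F :=
  IsTopologicalAddGroup.t2Space_of_zero_sep fun x hx =>
    ⟨ordBall ord (ord x + 1), hv.ordBall_mem_nhds_zero _, by simp [ordBall, hx]⟩

theorem isCompact_ordBall (c : ℤ) : IsCompact (ordBall ord c) := by
  rw [hv.ordBall_eq_zpow_smul c]
  exact hv.isCompact_ordBall_zero.smul _

theorem eventually_ord_eq_zero_nhds_one : ∀ᶠ x in 𝓝 (1 : F), x ≠ 0 ∧ ord x = 0 := by
  have := hv.t2Space
  have h1 : (1 : F) ∉ ordBall ord 1 := by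
    simp [ordBall, ord_one_of_map_mul hv.ord_mul]
  have hfar : ∀ᶠ x in 𝓝 (1 : F), ∀ y ∈ ordBall ord 1, x * y ≠ 1 ∧ x ≠ y :=
    (hv.isCompact_ordBall 1).eventually_forall_of_forall_eventually fun y hy =>
      ((isOpen_ne_fun (continuous_fst.mul continuous_snd) continuous_const).inter
        (isOpen_ne_fun continuous_fst continuous_snd)).mem_nhds
        ⟨by simpa using fun h : y = 1 => h1 (h ▸ hy), fun h : 1 = y => h1 (h ▸ hy)⟩
  filter_upwards [hfar] with x hx
  have hx0 : x ≠ 0 := (hx 0 (Or.inl rfl)).2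
  refine ⟨hx0, le_antisymm ?_ ?_⟩
  · by_contra h
    exact (hx x (Or.inr (by omega))).2 rfl
  · by_contra h
    exact (hx x⁻¹ (Or.inr (by rw [ord_inv_of_map_mul hv.ord_mul hx0]; omega))).1
      (mul_inv_cancel₀ hx0)

theorem eventually_ord_eq_nhds {x : F} (hx : x ≠ 0) :
    ∀ᶠ y in 𝓝 x, y ≠ 0 ∧ ord y = ord x := by
  have hlim : Tendsto (x⁻¹ * ·) (𝓝 x) (𝓝 1) := by
    simpa [inv_mul_cancel₀ hx] using (continuous_const_mul x⁻¹).tendsto x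
  filter_upwards [hlim.eventually hv.eventually_ord_eq_zero_nhds_one] with y ⟨hy0, hy⟩
  have hy0' : y ≠ 0 := right_ne_zero_of_mul hy0
  rw [hv.ord_mul _ _ (inv_ne_zero hx) hy0', ord_inv_of_map_mul hv.ord_mul hx] at hy
  exact ⟨hy0', by omega⟩

theorem isOpen_ordBall (c : ℤ) : IsOpen (ordBall ord c) := by
  refine isOpen_iff_mem_nhds.2 fun x hx => ?_
  rcases eq_or_ne x 0 with rfl | hx0
  · exact hv.ordBall_mem_nhds_zero c
  · filter_upwards [hv.eventually_ord_eq_nhds hx0] with y hy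
    exact Or.inr (hy.2 ▸ hx.resolve_left hx0)

theorem exists_subset_ordBall {C : Set F} (hC : IsCompact C) : ∃ M : ℤ, C ⊆ ordBall ord M := by
  have hmono : Monotone fun m : ℕ => ordBall ord (-m) :=
    fun a b hab => ordBall_antitone ord (by omega)
  obtain ⟨m, hm⟩ := hC.elim_directed_cover (fun m : ℕ => ordBall ord (-m))
    (fun m => hv.isOpen_ordBall _)
    (fun x _ => mem_iUnion.2 ⟨(-ord x).toNat, Or.inr (by omega)⟩) hmono.directed_le
  exact ⟨-m, hm⟩

theorem hasCompactSupport_iff [Zero K] {f : F → K} :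
    HasCompactSupport f ↔ ∃ M : ℤ, support f ⊆ ordBall ord M := by
  have := hv.t2Space
  refine ⟨fun hf => (hv.exists_subset_ordBall hf).imp fun _ hM => (subset_tsupport f).trans hM,
    fun ⟨M, hM⟩ => ?_⟩
  exact HasCompactSupport.intro (hv.isCompact_ordBall M) fun x hx =>
    notMem_support.1 fun h => hx (hM h)

theorem finite_support_geomSum_term_of_hasCompactSupport [Zero K] {f : F → K}
    (hf : HasCompactSupport f) {x : F} (hx : x ≠ 0) :
    (support fun n : ℕ => f ((ϖ ^ n)⁻¹ * x)).Finite := by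
  obtain ⟨M, hM⟩ := hv.hasCompactSupport_iff.1 hf
  exact hv.finite_support_geomSum_term hM hx

theorem isLocallyConstant_update_geomSum [TopologicalSpace K] [AddCommMonoid K] [DecidableEq F]
    {f : F → K} {M N : ℤ} (hM : support f ⊆ ordBall ord M) (hN : ∀ x ∈ ordBall ord N, f x = 0)
    (hf : IsUnitInv ord f) :
    IsLocallyConstant (update (geomSum ϖ f) 0 (geomSum ϖ f (ϖ ^ N))) := by
  refine (IsLocallyConstant.iff_eventually_eq _).2 fun x => ?_
  rcases eq_or_ne x 0 with rfl | hx
  · filter_upwards [hv.ordBall_mem_nhds_zero N] with y hy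
    rcases eq_or_ne y 0 with rfl | hy0
    · rfl
    · rw [update_of_ne hy0, update_self]
      exact hv.geomSum_eq_of_le_ord hM hN hf hy0 (hy.resolve_left hy0)
  · filter_upwards [hv.eventually_ord_eq_nhds hx] with y ⟨hy0, hy⟩
    rw [update_of_ne hy0, update_of_ne hx]
    exact (isUnitInv_geomSum ϖ hf).eq_of_ord_eq hv.ord_mul hy0 hx hy

theorem exists_extension_geomSum [TopologicalSpace K] [AddCommMonoid K] {f : F → K}
    (hf : MemCcUnits f) (hinv : IsUnitInv ord f) :
    ∃ g : F → K, IsLocallyConstant g ∧ HasCompactSupport g ∧ IsUnitInv ord g ∧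
      ∀ x : F, x ≠ 0 → g x = geomSum ϖ f x := by
  classical
  obtain ⟨M, hM⟩ := hv.hasCompactSupport_iff.1 hf.2.1
  obtain ⟨N, -, hN⟩ := hv.hasBasis_nhds_zero.eventually_iff.1 hf.2.2
  refine ⟨update (geomSum ϖ f) 0 (geomSum ϖ f (ϖ ^ (N : ℤ))),
    hv.isLocallyConstant_update_geomSum hM hN hinv, hv.hasCompactSupport_iff.2 ⟨M, ?_⟩,
    (isUnitInv_geomSum ϖ hinv).update_zero _, fun x hx => update_of_ne hx _ _⟩
  intro x hx
  rcases eq_or_ne x 0 with rfl | hx0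
  · exact Or.inl rfl
  · rw [mem_support, update_of_ne hx0] at hx
    exact Or.inr (not_lt.1 fun h => hx (hv.geomSum_eq_zero_of_ord_lt hM hx0 h))

theorem eq_of_geomSum_eq [TopologicalSpace K] [AddCommGroup K] {f₁ f₂ : F → K}
    (hf₁ : MemCcUnits f₁) (hf₂ : MemCcUnits f₂)
    (h : ∀ x : F, x ≠ 0 → geomSum ϖ f₁ x = geomSum ϖ f₂ x) : f₁ = f₂ := by
  funext x
  rcases eq_or_ne x 0 with rfl | hx
  · exact hf₁.2.2.eq_of_nhds.trans hf₂.2.2.eq_of_nhds.symm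
  · have e₁ := geomSum_eq_add_geomSum_inv_mul ϖ
      (hv.finite_support_geomSum_term_of_hasCompactSupport hf₁.2.1 hx)
    have e₂ := geomSum_eq_add_geomSum_inv_mul ϖ
      (hv.finite_support_geomSum_term_of_hasCompactSupport hf₂.2.1 hx)
    rw [h x hx, h _ (mul_ne_zero (inv_ne_zero hv.ne_zero) hx)] at e₁
    exact add_right_cancel (e₁.symm.trans e₂)

theorem exists_geomSum_eq [TopologicalSpace K] [AddCommGroup K] {g : F → K}
    (hg : IsLocallyConstant g) (hgc : HasCompactSupport g) (hginv : IsUnitInv ord g) :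
    ∃ f : F → K, MemCcUnits f ∧ IsUnitInv ord f ∧ ∀ x : F, x ≠ 0 → g x = geomSum ϖ f x :=
  ⟨_, memCcUnits_sub_comp_inv_mul hv.ne_zero hg hgc,
    fun u x hu hu0 => by
      simp only [mul_left_comm ϖ⁻¹ u x, hginv u x hu hu0, hginv u (ϖ⁻¹ * x) hu hu0],
    fun x hx => (geomSum_sub_comp_inv_mul ϖ
      (hv.finite_support_geomSum_term_of_hasCompactSupport hgc hx)).symm⟩

end IsLocalFieldOrd

theorem stmt7_general [Field F] [TopologicalSpace F] [IsTopologicalRing F]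
    [Field K] [TopologicalSpace K]
    (ord : F → ℤ)
    (hord : ∀ x y : F, x ≠ 0 → y ≠ 0 → ord (x * y) = ord x + ord y)
    (ϖ : F) (hϖ0 : ϖ ≠ 0) (hϖ : ord ϖ = 1)
    (hbasis : (nhds (0 : F)).HasBasis (fun _ : ℕ => True)
      (fun n => {x : F | x = 0 ∨ (n : ℤ) ≤ ord x}))
    (hcomp : IsCompact {x : F | x = 0 ∨ 0 ≤ ord x}) :
    -- finiteness of the sums
    (∀ f : F → K, MemCcUnits f → IsUnitInv ord f → ∀ x : F, x ≠ 0 →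
      (Function.support fun n : ℕ => f ((ϖ ^ n)⁻¹ * x)).Finite) ∧
    -- the sum extends to a `U`-invariant element of `C_c⁰(F, K)`
    (∀ f : F → K, MemCcUnits f → IsUnitInv ord f →
      ∃ g : F → K, IsLocallyConstant g ∧ HasCompactSupport g ∧ IsUnitInv ord g ∧
        ∀ x : F, x ≠ 0 → g x = geomSum ϖ f x) ∧
    -- injectivity
    (∀ f₁ f₂ : F → K, MemCcUnits f₁ → IsUnitInv ord f₁ → MemCcUnits f₂ → IsUnitInv ord f₂ →
      (∀ x : F, x ≠ 0 → geomSum ϖ f₁ x = geomSum ϖ f₂ x) → f₁ = f₂) ∧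
    -- `K`-linearity
    (∀ (f₁ f₂ : F → K) (c : K), MemCcUnits f₁ → IsUnitInv ord f₁ →
      MemCcUnits f₂ → IsUnitInv ord f₂ → ∀ x : F, x ≠ 0 →
      geomSum ϖ (c • f₁ + f₂) x = c • geomSum ϖ f₁ x + geomSum ϖ f₂ x) ∧
    -- `F^×`-equivariance for the action `(a·f)(x) = f(a⁻¹x)`
    (∀ (f : F → K) (a : F), a ≠ 0 → MemCcUnits f → IsUnitInv ord f → ∀ x : F, x ≠ 0 →
      geomSum ϖ (fun y => f (a⁻¹ * y)) x = geomSum ϖ f (a⁻¹ * x)) ∧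
    -- the image is exactly `C_c⁰(F, K)^U`
    (∀ g : F → K, IsLocallyConstant g → HasCompactSupport g → IsUnitInv ord g →
      ∃ f : F → K, MemCcUnits f ∧ IsUnitInv ord f ∧
        ∀ x : F, x ≠ 0 → g x = geomSum ϖ f x) := by
  have hv : IsLocalFieldOrd ord ϖ := ⟨⟨hord, hϖ0, hϖ⟩, hbasis, hcomp⟩
  refine ⟨fun f hf _ x hx => hv.finite_support_geomSum_term_of_hasCompactSupport hf.2.1 hx,
    fun f hf hinv => hv.exists_extension_geomSum hf hinv,
    fun f₁ f₂ hf₁ _ hf₂ _ => hv.eq_of_geomSum_eq hf₁ hf₂,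
    fun f₁ f₂ c hf₁ _ hf₂ _ x hx => geomSum_smul_add ϖ c
      (hv.finite_support_geomSum_term_of_hasCompactSupport hf₁.2.1 hx)
      (hv.finite_support_geomSum_term_of_hasCompactSupport hf₂.2.1 hx),
    fun f a _ _ _ x _ => geomSum_comp_inv_mul ϖ f a x,
    fun g hg hgc hginv => hv.exists_geomSum_eq hg hgc hginv⟩

/-- For `U`-invariant `f ∈ C_c(F^×, K)` the sum `∑_{n≥0} f(ϖ⁻ⁿx)` has
finitely many nonzero terms for each `x ∈ F^×`, and the resulting function on `F^×`
extends to a `U`-invariant locally constant compactly supported function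
`(1-ϖ)⁻¹f : F → K`. The map `f ↦ (1-ϖ)⁻¹f` is an injective `K`-linear `F^×`-equivariant
map `C_c(F^×, K)^U → C_c⁰(F, K)` with image exactly `C_c⁰(F, K)^U`. -/
theorem stmt7 [Field F] [TopologicalSpace F] [IsTopologicalRing F]
    [Field K] [TopologicalSpace K] [T2Space K] [IsTopologicalRing K]
    (ord : F → ℤ)
    (hord : ∀ x y : F, x ≠ 0 → y ≠ 0 → ord (x * y) = ord x + ord y)
    (ϖ : F) (hϖ0 : ϖ ≠ 0) (hϖ : ord ϖ = 1)
    (hbasis : (nhds (0 : F)).HasBasis (fun _ : ℕ => True)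
      (fun n => {x : F | x = 0 ∨ (n : ℤ) ≤ ord x}))
    (hcomp : IsCompact {x : F | x = 0 ∨ 0 ≤ ord x}) :
    -- finiteness of the sums
    (∀ f : F → K, MemCcUnits f → IsUnitInv ord f → ∀ x : F, x ≠ 0 →
      (Function.support fun n : ℕ => f ((ϖ ^ n)⁻¹ * x)).Finite) ∧
    -- the sum extends to a `U`-invariant element of `C_c⁰(F, K)`
    (∀ f : F → K, MemCcUnits f → IsUnitInv ord f →
      ∃ g : F → K, IsLocallyConstant g ∧ HasCompactSupport g ∧ IsUnitInv ord g ∧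
        ∀ x : F, x ≠ 0 → g x = geomSum ϖ f x) ∧
    -- injectivity
    (∀ f₁ f₂ : F → K, MemCcUnits f₁ → IsUnitInv ord f₁ → MemCcUnits f₂ → IsUnitInv ord f₂ →
      (∀ x : F, x ≠ 0 → geomSum ϖ f₁ x = geomSum ϖ f₂ x) → f₁ = f₂) ∧
    -- `K`-linearity
    (∀ (f₁ f₂ : F → K) (c : K), MemCcUnits f₁ → IsUnitInv ord f₁ →
      MemCcUnits f₂ → IsUnitInv ord f₂ → ∀ x : F, x ≠ 0 →
      geomSum ϖ (c • f₁ + f₂) x = c • geomSum ϖ f₁ x + geomSum ϖ f₂ x) ∧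
    -- `F^×`-equivariance for the action `(a·f)(x) = f(a⁻¹x)`
    (∀ (f : F → K) (a : F), a ≠ 0 → MemCcUnits f → IsUnitInv ord f → ∀ x : F, x ≠ 0 →
      geomSum ϖ (fun y => f (a⁻¹ * y)) x = geomSum ϖ f (a⁻¹ * x)) ∧
    -- the image is exactly `C_c⁰(F, K)^U`
    (∀ g : F → K, IsLocallyConstant g → HasCompactSupport g → IsUnitInv ord g →
      ∃ f : F → K, MemCcUnits f ∧ IsUnitInv ord f ∧
        ∀ x : F, x ≠ 0 → g x = geomSum ϖ f x) :=
  stmt7_general ord hord ϖ hϖ0 hϖ hbasis hcomp
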